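/- Let (X, μ) be a probability space, let φ : X → X be an ergodic measure-preserving transformation, and let f ∈ L²(X, μ). Suppose there is a constant K > 0 such that for all N ≥ 1, ∫_X ( Σ_{n=0}^{N−1} ( f(φ^n x) − ∫_X f dμ ) )² dμ(x) ≤ K·N. Then for every ε > 0 and μ-almost every x ∈ X there exist C(x) > 0 and N₀ such that for all N > N₀, | (1/N) Σ_{n=0}^{N−1} f(φ^n x) − ∫_X f dμ | ≤ C(x) · N^{−1/2} (log N)^{3/2} (log log N)^{1/2+ε}. -/

import Mathlib

/-!
The centred Birkhoff sums `S_N` form an additive cocycle, so for `N < 2^j` the sum `S_N` splits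
into at most one dyadic block of each length `2^l`, `l < j`, and by Cauchy–Schwarz `S_N²` is
dominated by `j` times the sum of the squares of all dyadic blocks of `[0, 2^j)`
(Rademacher–Menshov chaining). Since `φ` preserves `μ`, the second-moment hypothesis bounds the
integral of this square function by `j² K 2^j`. Markov's inequality at the thresholds
`K 2^j (j + 2)³ log (j + 2)^(1 + 2ε)` leaves exceptional probabilities of order
`1 / ((j + 2) log (j + 2)^(1 + 2ε))`, which are summable, so by Borel–Cantelli almost every `x`
eventually satisfies all these bounds; with `j = ⌊log₂ N⌋ + 1` the threshold is
`O(N (log N)³ (log log N)^(1 + 2ε))`.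
-/

open MeasureTheory Filter Finset Real

section DyadicChaining

variable (T : ℕ → ℕ → ℝ)

/-- Think of `T a b` as a sum over `[a, a + b)`: this adds up the squares of the `2^(j - l)`
blocks of length `2^l` tiling `[a, a + 2^j)`. -/
def dyadicLevelSq (a j l : ℕ) : ℝ :=
  ∑ i ∈ range (2 ^ (j - l)), T (a + i * 2 ^ l) (2 ^ l) ^ 2

variable {T}

lemma dyadicLevelSq_nonneg (a j l : ℕ) : 0 ≤ dyadicLevelSq T a j l :=
  sum_nonneg fun _ _ => sq_nonneg _

lemma dyadicLevelSq_succ {a j l : ℕ} (hl : l ≤ j) :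
    dyadicLevelSq T a (j + 1) l = dyadicLevelSq T a j l + dyadicLevelSq T (a + 2 ^ j) j l := by
  have hcount : 2 ^ (j + 1 - l) = 2 ^ (j - l) + 2 ^ (j - l) := by
    rw [Nat.sub_add_comm hl, pow_succ, mul_two]
  rw [dyadicLevelSq, hcount, sum_range_add]
  congr 1
  refine sum_congr rfl fun i _ => ?_
  rw [add_mul, ← pow_add, Nat.sub_add_cancel hl, add_assoc]

/-- An initial segment of `[a, a + 2^j)` is a disjoint union of at most one dyadic block of each
length `2^l`, `l < j`. -/
lemma abs_le_sum_sqrt_dyadicLevelSq (hT : ∀ a b c, T a (b + c) = T a b + T (a + b) c) :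
    ∀ j a M, M < 2 ^ j → |T a M| ≤ ∑ l ∈ range j, √(dyadicLevelSq T a j l)
  | 0, a, M, hM => by
    have hT0 : T a 0 = 0 := by simpa using hT a 0 0
    simp [Nat.lt_one_iff.1 (by simpa using hM), hT0]
  | j + 1, a, M, hM => by
    have hmono : ∀ b, b = a ∨ b = a + 2 ^ j →
        ∑ l ∈ range j, √(dyadicLevelSq T b j l) ≤
          ∑ l ∈ range j, √(dyadicLevelSq T a (j + 1) l) := by
      rintro b hb
      refine sum_le_sum fun l hl => sqrt_le_sqrt ?_
      rw [dyadicLevelSq_succ (mem_range.1 hl).le]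
      rcases hb with rfl | rfl
      · exact le_add_of_nonneg_right (dyadicLevelSq_nonneg _ _ _)
      · exact le_add_of_nonneg_left (dyadicLevelSq_nonneg _ _ _)
    rw [sum_range_succ]
    rcases lt_or_ge M (2 ^ j) with hM' | hM'
    · calc |T a M| ≤ ∑ l ∈ range j, √(dyadicLevelSq T a j l) :=
            abs_le_sum_sqrt_dyadicLevelSq hT j a M hM'
        _ ≤ _ := (hmono a (.inl rfl)).trans (le_add_of_nonneg_right (sqrt_nonneg _))
    · obtain ⟨M', rfl⟩ := Nat.exists_eq_add_of_le hM'
      have hM' : M' < 2 ^ j := by rw [pow_succ] at hM; omega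
      have hfirst : |T a (2 ^ j)| ≤ √(dyadicLevelSq T a (j + 1) j) :=
        abs_le_sqrt <| by simp [dyadicLevelSq, sum_range_succ, sq_nonneg]
      rw [hT, add_comm (∑ l ∈ range j, _)]
      calc |T a (2 ^ j) + T (a + 2 ^ j) M'| ≤ |T a (2 ^ j)| + |T (a + 2 ^ j) M'| := abs_add_le _ _
        _ ≤ _ := add_le_add hfirst ((abs_le_sum_sqrt_dyadicLevelSq hT j _ M' hM').trans
            (hmono _ (.inr rfl)))

lemma sq_le_mul_sum_dyadicLevelSq (hT : ∀ a b c, T a (b + c) = T a b + T (a + b) c)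
    {j a M : ℕ} (hM : M < 2 ^ j) :
    T a M ^ 2 ≤ j * ∑ l ∈ range j, dyadicLevelSq T a j l := by
  calc T a M ^ 2 = |T a M| ^ 2 := (sq_abs _).symm
    _ ≤ (∑ l ∈ range j, √(dyadicLevelSq T a j l)) ^ 2 :=
        pow_le_pow_left₀ (abs_nonneg _) (abs_le_sum_sqrt_dyadicLevelSq hT j a M hM) 2
    _ ≤ (range j).card * ∑ l ∈ range j, √(dyadicLevelSq T a j l) ^ 2 :=
        sq_sum_le_card_mul_sum_sq
    _ = j * ∑ l ∈ range j, dyadicLevelSq T a j l := by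
        simp [sq_sqrt (dyadicLevelSq_nonneg _ _ _)]

end DyadicChaining

section BirkhoffSums

variable {X : Type*} {φ : X → X} {g : X → ℝ}

def birkhoffBlockSum (φ : X → X) (g : X → ℝ) (x : X) (a b : ℕ) : ℝ :=
  birkhoffSum φ g b (φ^[a] x)

lemma birkhoffBlockSum_add (x : X) (a b c : ℕ) :
    birkhoffBlockSum φ g x a (b + c) =
      birkhoffBlockSum φ g x a b + birkhoffBlockSum φ g x (a + b) c := by
  simp only [birkhoffBlockSum, birkhoffSum_add, ← Function.iterate_add_apply, add_comm b a]

def dyadicSquareFunction (φ : X → X) (g : X → ℝ) (j : ℕ) (x : X) : ℝ :=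
  j * ∑ l ∈ range j, dyadicLevelSq (birkhoffBlockSum φ g x) 0 j l

lemma dyadicSquareFunction_nonneg (j : ℕ) (x : X) : 0 ≤ dyadicSquareFunction φ g j x :=
  mul_nonneg j.cast_nonneg (sum_nonneg fun _ _ => dyadicLevelSq_nonneg _ _ _)

lemma sq_birkhoffSum_le_dyadicSquareFunction {j N : ℕ} (hN : N < 2 ^ j) (x : X) :
    birkhoffSum φ g N x ^ 2 ≤ dyadicSquareFunction φ g j x :=
  sq_le_mul_sum_dyadicLevelSq (a := 0) (birkhoffBlockSum_add x) hN

variable [MeasurableSpace X] {μ : Measure X}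

lemma memLp_birkhoffSum {p : ENNReal} (hφ : MeasurePreserving φ μ μ) (hg : MemLp g p μ)
    (n : ℕ) :
    MemLp (birkhoffSum φ g n) p μ := by
  have hsum : birkhoffSum φ g n = ∑ k ∈ range n, g ∘ φ^[k] := by
    ext x
    simp [birkhoffSum]
  rw [hsum]
  exact memLp_finsetSum' _ fun k _ => hg.comp_measurePreserving (hφ.iterate k)

variable (hφ : MeasurePreserving φ μ μ) (hg : MemLp g 2 μ)
include hφ hg

lemma integral_sq_birkhoffBlockSum (a b : ℕ) :
    ∫ x, birkhoffBlockSum φ g x a b ^ 2 ∂μ = ∫ x, birkhoffSum φ g b x ^ 2 ∂μ := by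
  have hmeas : AEStronglyMeasurable (fun y => birkhoffSum φ g b y ^ 2) (μ.map φ^[a]) := by
    rw [(hφ.iterate a).map_eq]
    exact (memLp_birkhoffSum hφ hg b).integrable_sq.aestronglyMeasurable
  calc ∫ x, birkhoffBlockSum φ g x a b ^ 2 ∂μ
        = ∫ y, birkhoffSum φ g b y ^ 2 ∂(μ.map φ^[a]) :=
        (integral_map (hφ.iterate a).measurable.aemeasurable hmeas).symm
    _ = ∫ x, birkhoffSum φ g b x ^ 2 ∂μ := by rw [(hφ.iterate a).map_eq]

lemma integrable_sq_birkhoffBlockSum (a b : ℕ) :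
    Integrable (fun x => birkhoffBlockSum φ g x a b ^ 2) μ :=
  ((memLp_birkhoffSum hφ hg b).comp_measurePreserving (hφ.iterate a)).integrable_sq

lemma integrable_dyadicLevelSq (a j l : ℕ) :
    Integrable (fun x => dyadicLevelSq (birkhoffBlockSum φ g x) a j l) μ :=
  integrable_finsetSum _ fun _ _ => integrable_sq_birkhoffBlockSum hφ hg _ _

lemma integral_dyadicLevelSq (a j l : ℕ) :
    ∫ x, dyadicLevelSq (birkhoffBlockSum φ g x) a j l ∂μ =
      2 ^ (j - l) * ∫ x, birkhoffSum φ g (2 ^ l) x ^ 2 ∂μ := by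
  simp only [dyadicLevelSq]
  rw [integral_finsetSum _ fun _ _ => integrable_sq_birkhoffBlockSum hφ hg _ _]
  simp [integral_sq_birkhoffBlockSum hφ hg]

lemma integral_dyadicSquareFunction_le {K : ℝ}
    (hK : ∀ n : ℕ, ∫ x, birkhoffSum φ g n x ^ 2 ∂μ ≤ K * n) (j : ℕ) :
    ∫ x, dyadicSquareFunction φ g j x ∂μ ≤ j ^ 2 * K * 2 ^ j := by
  have hlevel : ∀ l ∈ range j,
      ∫ x, dyadicLevelSq (birkhoffBlockSum φ g x) 0 j l ∂μ ≤ K * 2 ^ j := by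
    intro l hl
    have h2 : (2 : ℝ) ^ (j - l) * 2 ^ l = 2 ^ j := by
      rw [← pow_add, Nat.sub_add_cancel (mem_range.1 hl).le]
    rw [integral_dyadicLevelSq hφ hg, ← h2]
    have := hK (2 ^ l)
    push_cast at this
    nlinarith [pow_pos (two_pos (α := ℝ)) (j - l)]
  calc ∫ x, dyadicSquareFunction φ g j x ∂μ
      = j * ∑ l ∈ range j, ∫ x, dyadicLevelSq (birkhoffBlockSum φ g x) 0 j l ∂μ := by
        simp only [dyadicSquareFunction]
        rw [integral_const_mul,
          integral_finsetSum _ fun l _ => integrable_dyadicLevelSq hφ hg 0 j l]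
    _ ≤ j * ∑ l ∈ range j, K * 2 ^ j := by gcongr with l hl; exact hlevel l hl
    _ = j ^ 2 * K * 2 ^ j := by simp only [sum_const, card_range, nsmul_eq_mul]; ring

lemma integrable_dyadicSquareFunction (j : ℕ) : Integrable (dyadicSquareFunction φ g j) μ :=
  (integrable_finsetSum _ fun l _ => integrable_dyadicLevelSq hφ hg 0 j l).const_mul _

lemma ae_eventually_forall_sq_birkhoffSum_lt [IsFiniteMeasure μ] {K : ℝ}
    (hK : ∀ n : ℕ, ∫ x, birkhoffSum φ g n x ^ 2 ∂μ ≤ K * n)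
    {t : ℕ → ℝ} (ht : ∀ j, 0 < t j)
    (hsum : Summable fun j : ℕ => (j : ℝ) ^ 2 * K * 2 ^ j / t j) :
    ∀ᵐ x ∂μ, ∀ᶠ j in atTop, ∀ N < 2 ^ j, birkhoffSum φ g N x ^ 2 < t j := by
  have hmarkov : ∀ j, μ {x | t j ≤ dyadicSquareFunction φ g j x} ≤
      ENNReal.ofReal ((j : ℝ) ^ 2 * K * 2 ^ j / t j) := by
    intro j
    rw [← ENNReal.ofReal_toReal (measure_ne_top μ _)]
    refine ENNReal.ofReal_le_ofReal ((le_div_iff₀ (ht j)).2 ?_)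
    rw [mul_comm]
    exact (mul_meas_ge_le_integral_of_nonneg (.of_forall (dyadicSquareFunction_nonneg j))
      (integrable_dyadicSquareFunction hφ hg j) (t j)).trans
        (integral_dyadicSquareFunction_le hφ hg hK j)
  have hfinite : ∑' j, μ {x | t j ≤ dyadicSquareFunction φ g j x} ≠ ⊤ :=
    ne_top_of_le_ne_top hsum.tsum_ofReal_ne_top (ENNReal.tsum_le_tsum hmarkov)
  filter_upwards [ae_eventually_notMem hfinite] with x hx
  filter_upwards [hx] with j hj N hN
  exact (sq_birkhoffSum_le_dyadicSquareFunction hN x).trans_lt (not_le.1 hj)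

end BirkhoffSums

lemma summable_one_div_mul_log_rpow {q : ℝ} (hq : 1 < q) :
    Summable fun j : ℕ => 1 / (((j : ℝ) + 2) * log ((j : ℝ) + 2) ^ q) := by
  have hpos : ∀ x : ℝ, 2 ≤ x → 0 < x * log x ^ q := fun x hx =>
    mul_pos (by linarith) (rpow_pos_of_pos (log_pos (by linarith)) q)
  have hanti : ∀ x y : ℝ, 2 ≤ x → x ≤ y →
      1 / (y * log y ^ q) ≤ 1 / (x * log x ^ q) := by
    intro x y hx hxy
    have hlx : 0 ≤ log x := log_nonneg (by linarith)
    exact one_div_le_one_div_of_le (hpos x hx) (mul_le_mul hxy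
      (rpow_le_rpow hlx (log_le_log (by linarith) hxy) (by linarith)) (rpow_nonneg hlx q)
      (by linarith))
  have hj : ∀ j : ℕ, (2 : ℝ) ≤ j + 2 := fun j => by linarith [j.cast_nonneg (α := ℝ)]
  rw [← summable_condensed_iff_of_nonneg (fun j => (one_div_pos.2 (hpos _ (hj j))).le)
    (fun m n _ hmn => hanti _ _ (hj m) (by gcongr))]
  refine (summable_nat_add_iff 1).1 ?_
  have hpseries : Summable fun k : ℕ => log 2 ^ (-q) * ((k : ℝ) + 1) ^ (-q) := by
    refine Summable.mul_left _ ?_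
    exact_mod_cast (summable_nat_add_iff 1).2 (summable_nat_rpow.2 (by linarith : -q < -1))
  refine hpseries.of_nonneg_of_le
    (fun k => mul_nonneg (by positivity) (one_div_pos.2 (hpos _ (hj _))).le) fun k => ?_
  have hk : 0 < ((k : ℝ) + 1) * log 2 := by positivity
  push_cast
  calc (2 : ℝ) ^ (k + 1) * (1 / ((2 ^ (k + 1) + 2) * log (2 ^ (k + 1) + 2) ^ q))
      ≤ 2 ^ (k + 1) * (1 / (2 ^ (k + 1) * log (2 ^ (k + 1)) ^ q)) := by
        refine mul_le_mul_of_nonneg_left (hanti _ _ ?_ (by linarith)) (by positivity)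
        exact le_self_pow₀ one_le_two k.succ_ne_zero
    _ = (((k : ℝ) + 1) * log 2) ^ (-q) := by
        rw [log_pow, rpow_neg hk.le]
        push_cast
        field_simp
    _ = log 2 ^ (-q) * ((k : ℝ) + 1) ^ (-q) := by
        rw [mul_rpow (by positivity) (by positivity), mul_comm]

lemma two_pow_mul_log_rpow_le {p : ℝ} (hp : 0 ≤ p) {j : ℕ} {N : ℝ} (hj : 5 ≤ j)
    (hN : (2 : ℝ) ^ j ≤ 2 * N) :
    2 ^ j * ((j : ℝ) + 2) ^ 3 * log ((j : ℝ) + 2) ^ p ≤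
      2 * (3 / log 2) ^ 3 * 2 ^ p * (N * log N ^ 3 * log (log N) ^ p) := by
  have hlog2 := log_two_gt_d9
  have hjR : (5 : ℝ) ≤ j := by exact_mod_cast hj
  have hNpos : 0 < N := by linarith [pow_pos (two_pos (α := ℝ)) j]
  have hlogN : ((j : ℝ) - 1) * log 2 ≤ log N := by
    have h := log_le_log (by positivity) hN
    rw [log_pow, log_mul two_ne_zero hNpos.ne'] at h
    linarith
  have hsize : (j : ℝ) + 2 ≤ 3 / log 2 * log N := by
    rw [div_mul_eq_mul_div, le_div_iff₀ (by linarith)]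
    nlinarith
  have hloglog : log ((j : ℝ) + 2) ≤ 2 * log (log N) := by
    have hlogN' : ((j : ℝ) - 1) * 0.6931 ≤ log N := by nlinarith
    have h : (j : ℝ) + 2 ≤ log N ^ 2 :=
      (by nlinarith : (j : ℝ) + 2 ≤ (((j : ℝ) - 1) * 0.6931) ^ 2).trans
        (pow_le_pow_left₀ (by linarith) hlogN' 2)
    simpa [log_pow] using log_le_log (by positivity) h
  have hLj : 0 ≤ log ((j : ℝ) + 2) := log_nonneg (by linarith)
  have hLN : 0 ≤ log N := by nlinarith
  calc 2 ^ j * ((j : ℝ) + 2) ^ 3 * log ((j : ℝ) + 2) ^ p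
      ≤ 2 * N * (3 / log 2 * log N) ^ 3 * (2 * log (log N)) ^ p := by
        gcongr
    _ = 2 * (3 / log 2) ^ 3 * 2 ^ p * (N * log N ^ 3 * log (log N) ^ p) := by
        rw [mul_rpow zero_le_two (by linarith)]
        ring

lemma abs_div_le_of_sq_le {s N L L' C p : ℝ} (hN : 0 < N) (hL : 0 ≤ L) (hL' : 0 ≤ L')
    (hC : 0 ≤ C) (h : s ^ 2 ≤ C * (N * L ^ 3 * L' ^ (2 * p))) :
    |s / N| ≤ √C * N ^ (-(1 : ℝ) / 2) * L ^ ((3 : ℝ) / 2) * L' ^ p := by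
  rw [abs_div, abs_of_pos hN, div_le_iff₀ hN]
  refine abs_le_of_sq_le_sq (h.trans_eq ?_) (by positivity)
  have hsq : ∀ {x : ℝ} (y : ℝ), 0 ≤ x → (x ^ y) ^ 2 = x ^ (y * 2) := fun y hx => by
    exact_mod_cast (rpow_mul_natCast hx y 2).symm
  rw [mul_pow, mul_pow, mul_pow, mul_pow, sq_sqrt hC, hsq _ hN.le, hsq _ hL, hsq _ hL',
    show (3 : ℝ) / 2 * 2 = (3 : ℕ) by norm_num, rpow_natCast,
    show -(1 : ℝ) / 2 * 2 = -1 by norm_num, rpow_neg_one, mul_comm p]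
  field_simp

noncomputable def dyadicThreshold (K q : ℝ) (j : ℕ) : ℝ :=
  K * (2 ^ j * ((j : ℝ) + 2) ^ 3 * log ((j : ℝ) + 2) ^ q)

lemma dyadicThreshold_pos {K : ℝ} (hK : 0 < K) (q : ℝ) (j : ℕ) :
    0 < dyadicThreshold K q j := by
  have : 0 < log ((j : ℝ) + 2) ^ q :=
    rpow_pos_of_pos (log_pos (by linarith [j.cast_nonneg (α := ℝ)])) q
  unfold dyadicThreshold
  positivity

lemma summable_sq_mul_two_pow_div_dyadicThreshold {K q : ℝ} (hK : 0 < K) (hq : 1 < q) :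
    Summable fun j : ℕ => (j : ℝ) ^ 2 * K * 2 ^ j / dyadicThreshold K q j := by
  refine (summable_one_div_mul_log_rpow hq).of_nonneg_of_le
    (fun j => div_nonneg (by positivity) (dyadicThreshold_pos hK q j).le) fun j => ?_
  have hL : 0 < log ((j : ℝ) + 2) ^ q :=
    rpow_pos_of_pos (log_pos (by linarith [j.cast_nonneg (α := ℝ)])) q
  have hj : (0 : ℝ) < j + 2 := by positivity
  rw [dyadicThreshold, show (j : ℝ) ^ 2 * K * 2 ^ j /
      (K * (2 ^ j * ((j : ℝ) + 2) ^ 3 * log ((j : ℝ) + 2) ^ q)) =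
      (j : ℝ) ^ 2 / ((j : ℝ) + 2) ^ 2 * (1 / (((j : ℝ) + 2) * log ((j : ℝ) + 2) ^ q)) by
    field_simp]
  exact mul_le_of_le_one_left (by positivity) ((div_le_one (by positivity)).2 (by nlinarith))

lemma dyadicThreshold_log_succ_le {K q : ℝ} (hK : 0 ≤ K) (hq : 0 ≤ q) {N : ℕ}
    (hN : 2 ^ 5 ≤ N) :
    dyadicThreshold K q (Nat.log 2 N + 1) ≤
      K * (2 * (3 / log 2) ^ 3 * 2 ^ q) * (N * log N ^ 3 * log (log N) ^ q) := by
  have hlog : 2 ^ Nat.log 2 N ≤ N := Nat.pow_log_le_self 2 (by omega)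
  rw [dyadicThreshold, mul_assoc K]
  refine mul_le_mul_of_nonneg_left ?_ hK
  exact_mod_cast two_pow_mul_log_rpow_le hq
    (by linarith [Nat.le_log_of_pow_le one_lt_two hN])
    (by rw [pow_succ, mul_comm]; exact_mod_cast Nat.mul_le_mul_left 2 hlog)

lemma birkhoffSum_sub_const_div {X : Type*} (φ : X → X) (f : X → ℝ) (m : ℝ) {N : ℕ}
    (hN : N ≠ 0) (x : X) :
    birkhoffSum φ (fun y => f y - m) N x / N =
      1 / (N : ℝ) * ∑ n ∈ range N, f (φ^[n] x) - m := by
  simp only [birkhoffSum, sum_sub_distrib, sum_const, card_range, nsmul_eq_mul]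
  field_simp

/-- **Gaposhkin–Kachurovskii effective ergodic theorem**: if the second moment of the ergodic
sums of `f` grows at most linearly in `N`, then for every `ε > 0` the Birkhoff averages of `f`
converge a.e. with error of order `N^{-1/2} (log N)^{3/2} (log log N)^{1/2+ε}`. -/
theorem gaposhkin_effective_ergodic_theorem
    {X : Type*} [MeasurableSpace X] (μ : Measure X) [IsProbabilityMeasure μ]
    (φ : X → X) (hφ : Ergodic φ μ)
    (f : X → ℝ) (hf : MemLp f 2 μ)
    (K : ℝ) (hK : 0 < K)
    (hsecond : ∀ N : ℕ, 1 ≤ N →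
      ∫ x, (∑ n ∈ Finset.range N, (f (φ^[n] x) - ∫ y, f y ∂μ)) ^ 2 ∂μ ≤ K * N) :
    ∀ ε > (0:ℝ), ∀ᵐ x ∂μ, ∃ C > (0:ℝ), ∃ N₀ : ℕ, ∀ N : ℕ, N > N₀ →
      |(1 / (N:ℝ)) * ∑ n ∈ Finset.range N, f (φ^[n] x) - ∫ y, f y ∂μ|
        ≤ C * (N : ℝ) ^ (-(1:ℝ)/2) * (Real.log N) ^ ((3:ℝ)/2) *
            (Real.log (Real.log N)) ^ ((1:ℝ)/2 + ε) := by
  intro ε hε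
  have hS : ∀ n : ℕ,
      ∫ x, birkhoffSum φ (fun y => f y - ∫ y, f y ∂μ) n x ^ 2 ∂μ ≤ K * n := by
    rintro (_ | n)
    · simp
    · exact hsecond (n + 1) (by omega)
  have hq : 1 < 2 * (1 / 2 + ε) := by linarith
  filter_upwards [ae_eventually_forall_sq_birkhoffSum_lt hφ.toMeasurePreserving
    (hf.sub (memLp_const _)) hS (dyadicThreshold_pos hK _)
    (summable_sq_mul_two_pow_div_dyadicThreshold hK hq)] with x hx
  obtain ⟨j₀, hj₀⟩ := eventually_atTop.1 hx
  refine ⟨√(K * (2 * (3 / log 2) ^ 3 * 2 ^ (2 * (1 / 2 + ε)))), by positivity, 2 ^ max j₀ 5,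
    fun N hN => ?_⟩
  have hk : max j₀ 5 ≤ Nat.log 2 N := Nat.le_log_of_pow_le one_lt_two hN.le
  have hN32 : 2 ^ 5 ≤ N := (Nat.pow_le_pow_right two_pos (le_max_right j₀ 5)).trans hN.le
  have hN32' : (32 : ℝ) ≤ N := by exact_mod_cast hN32
  have hlogN : 1 ≤ log N := (le_log_iff_exp_le (by positivity)).2 (by linarith [exp_one_lt_d9])
  rw [← birkhoffSum_sub_const_div φ f _ (by omega)]
  exact abs_div_le_of_sq_le (by positivity) (by linarith) (log_nonneg hlogN) (by positivity)
    ((hj₀ _ (by omega) N (Nat.lt_pow_succ_log_self one_lt_two N)).le.trans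
      (dyadicThreshold_log_succ_le hK.le (by linarith) hN32))
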